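/- arXiv:math/0011146 — 2 statements merged into one kernel-verified Lean document; each statement's English description precedes it below -/
import Mathlib

section
/- For every real y ≥ 0, F(2;y) = 1 − b_0(√y) e^{−y}, where b_0(t) = I_0(2t) = Σ_{m=0}^∞ t^{2m}/(m!)². -/
open scoped BigOperators

/-- `σ` has an increasing subsequence of length `l`. -/
def hasIncSubseq (k : ℕ) (σ : Equiv.Perm (Fin k)) (l : ℕ) : Prop :=
  ∃ s : Fin l → Fin k, StrictMono s ∧ StrictMono (⇑σ ∘ s)

/-- `f k r`: the number of permutations of `{1,…,k}` all of whose increasing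
subsequences have length at most `r`. -/
noncomputable def f (k r : ℕ) : ℕ :=
  Nat.card {σ : Equiv.Perm (Fin k) // ∀ l, hasIncSubseq k σ l → l ≤ r}

/-- `D r t = Σ_{k≥0} f_{k,r} t^{2k}/(k!)²`. -/
noncomputable def D (r : ℕ) (t : ℝ) : ℝ :=
  ∑' k : ℕ, (f k r : ℝ) * t ^ (2 * k) / ((Nat.factorial k : ℝ)) ^ 2

/-- `F(r;y) = e^{-y} Σ_{k≥r} R_{k,r} y^k/(k!)²` with `R_{k,r} = k! - f_{k,r-1}`. -/
noncomputable def Fdist (r : ℕ) (y : ℝ) : ℝ :=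
  Real.exp (-y) *
    ∑' k : ℕ, (((r + k).factorial : ℝ) - (f (r + k) (r - 1) : ℝ)) * y ^ (r + k)
      / (((r + k).factorial : ℝ)) ^ 2

/-- `b j t = I_j(2t) = Σ_{m≥0} t^{2m+j}/(m!(m+j)!)`. -/
noncomputable def b (j : ℕ) (t : ℝ) : ℝ :=
  ∑' m : ℕ, t ^ (2 * m + j) / ((Nat.factorial m : ℝ) * (Nat.factorial (m + j) : ℝ))

/-- `φ_r(y) = e^{-y} D_r(√y)`. -/
noncomputable def phi (r : ℕ) (y : ℝ) : ℝ := Real.exp (-y) * D r (Real.sqrt y)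

/-- First moment `M(y) = Σ_{r≥0} (1 - φ_r(y))`. -/
noncomputable def M (y : ℝ) : ℝ := ∑' r : ℕ, (1 - phi r y)

/-- Second moment `S(y) = Σ_{r≥0} (2r+1)(1 - φ_r(y))`. -/
noncomputable def S (y : ℝ) : ℝ := ∑' r : ℕ, (2 * (r : ℝ) + 1) * (1 - phi r y)

/-- Variance `V(y) = S(y) - M(y)²`. -/
noncomputable def V (y : ℝ) : ℝ := S y - (M y) ^ 2

/-
A permutation with no increasing subsequence of length two is strictly decreasing, so it is the
reversal; hence `f_{k,1} = 1` and `R_{k,2} = k! - 1`. The series defining `F(2;y)` therefore splits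
as `Σ y^k/k! - Σ y^k/(k!)²`, where the terms `k = 0, 1` of the two series cancel, and these are
`e^y` and `I_0(2√y)`.
-/

section LongestIncreasing

variable {n : ℕ} {σ : Equiv.Perm (Fin n)}

lemma hasIncSubseq_two_of_lt {i j : Fin n} (hij : i < j) (hσ : σ i < σ j) :
    hasIncSubseq n σ 2 := by
  refine ⟨![i, j], ?_, ?_⟩ <;>
  · intro a b hab
    fin_cases a <;> fin_cases b <;> simp_all

lemma strictAnti_of_forall_hasIncSubseq_le_one (h : ∀ l, hasIncSubseq n σ l → l ≤ 1) :
    StrictAnti σ := by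
  intro i j hij
  refine lt_of_le_of_ne (not_lt.1 fun hσ => ?_) (σ.injective.ne hij.ne')
  exact absurd (h 2 (hasIncSubseq_two_of_lt hij hσ)) (by norm_num)

lemma eq_revPerm_of_strictAnti (hσ : StrictAnti σ) : σ = Fin.revPerm := by
  have hmono : StrictMono fun x => (σ x).rev := fun _ _ hab => Fin.rev_lt_rev.2 (hσ hab)
  ext x
  simpa using congrArg (fun y : Fin n => (y.rev : ℕ)) hmono.apply_eq

lemma hasIncSubseq_revPerm_le_one {l : ℕ} (h : hasIncSubseq n Fin.revPerm l) : l ≤ 1 := by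
  obtain ⟨s, hs, hrev⟩ := h
  by_contra! hl
  have h01 : (⟨0, by omega⟩ : Fin l) < ⟨1, hl⟩ := Fin.mk_lt_mk.2 zero_lt_one
  exact (hs h01).not_gt (Fin.rev_lt_rev.1 (hrev h01))

lemma forall_hasIncSubseq_le_one_iff :
    (∀ l, hasIncSubseq n σ l → l ≤ 1) ↔ σ = Fin.revPerm :=
  ⟨fun h => eq_revPerm_of_strictAnti (strictAnti_of_forall_hasIncSubseq_le_one h),
    fun h _ => h ▸ hasIncSubseq_revPerm_le_one⟩

end LongestIncreasing

lemma f_one (n : ℕ) : f n 1 = 1 := by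
  rw [f, Nat.card_congr (Equiv.subtypeEquivRight fun σ => forall_hasIncSubseq_le_one_iff)]
  exact Nat.card_unique

lemma summable_pow_div_factorial_sq (x : ℝ) :
    Summable fun n => x ^ n / (n.factorial : ℝ) ^ 2 := by
  refine (Real.summable_pow_div_factorial |x|).of_norm_bounded fun n => ?_
  have hfac : (1 : ℝ) ≤ n.factorial := Nat.one_le_cast.2 n.factorial_pos
  rw [norm_div, norm_pow, Real.norm_eq_abs, norm_pow, Real.norm_natCast]
  gcongr
  nlinarith

lemma tsum_pow_div_factorial_eq_exp (x : ℝ) : ∑' n, x ^ n / n.factorial = Real.exp x := by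
  rw [Real.exp_eq_exp_ℝ, NormedSpace.exp_eq_tsum_div]

lemma b_zero_sqrt {y : ℝ} (hy : 0 ≤ y) :
    b 0 (Real.sqrt y) = ∑' n, y ^ n / (n.factorial : ℝ) ^ 2 := by
  refine tsum_congr fun n => ?_
  simp only [add_zero, pow_mul, Real.sq_sqrt hy, sq]

lemma tsum_two_add_eq_tsum {g : ℕ → ℝ} (hg : Summable g) (h0 : g 0 = 0) (h1 : g 1 = 0) :
    ∑' k, g (2 + k) = ∑' k, g k := by
  simp_rw [add_comm 2]
  simp [← hg.sum_add_tsum_nat_add 2, Finset.sum_range_succ, h0, h1]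

theorem stmt4 (y : ℝ) (hy : 0 ≤ y) :
    Fdist 2 y = 1 - b 0 (Real.sqrt y) * Real.exp (-y) := by
  have hE := Real.summable_pow_div_factorial y
  have hG := summable_pow_div_factorial_sq y
  set g : ℕ → ℝ := fun n => y ^ n / n.factorial - y ^ n / (n.factorial : ℝ) ^ 2
  have hg : Summable g := hE.sub hG
  have hterm (k : ℕ) : (((2 + k).factorial : ℝ) - (f (2 + k) (2 - 1) : ℝ)) * y ^ (2 + k)
      / (((2 + k).factorial : ℝ)) ^ 2 = g (2 + k) := by
    have : ((2 + k).factorial : ℝ) ≠ 0 := by positivity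
    simp only [g, Nat.add_one_sub_one, f_one, Nat.cast_one]
    field_simp
  rw [Fdist, tsum_congr hterm, tsum_two_add_eq_tsum hg (by simp [g]) (by simp [g]),
    hE.tsum_sub hG, ← b_zero_sqrt hy, tsum_pow_div_factorial_eq_exp, mul_sub,
    ← Real.exp_add, neg_add_cancel, Real.exp_zero, mul_comm]
end

section
/- For every real y ≥ 0, F(3;y) = 1 − (b_0(√y)² − b_1(√y)²) e^{−y}, where b_j(t) = I_j(2t) = Σ_{m=0}^∞ t^{2m+j}/(m!(m+j)!). -/
open scoped BigOperators

/-!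
For `k ≤ r - 1` every increasing subsequence of a permutation of `k` letters has length at most
`r - 1`, so `k! - f_{k,r-1}` vanishes for `k < r`, the sum defining `F(r; y)` may start at `k = 0`,
and `F(r; y) = 1 - e^{-y} D_{r-1}(√y)`. For `r = 3` it remains to show
`D_2(t) = b_0(t)² - b_1(t)²`.

Permutations without increasing subsequences of length 3 are the 123-avoiding ones, and they are
counted by the Catalan numbers. Written in one-line notation, a 123-avoiding arrangement of
`0, …, n` either starts with `n` or has `n` right after its maximal decreasing prefix, since an
ascent `x < y` before `n` would give a pattern `x < y < n`. Deleting `n` shows that the number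
`T(n, s)` of avoiders whose decreasing prefix has length at least `s` satisfies the ballot recursion
`T(n + 1, s + 1) = T(n, s) + T(n + 1, s + 2)`; hence `T(n, s) = C(2n - s, n) - C(2n - s, n + 1)` and
`T(n, 0) = C(2n, n) - C(2n, n + 1) = catalan n`.

On the analytic side, Cauchy products and Vandermonde's identity give
`b_0(t)² = ∑ C(2n, n) t^{2n} / n!²` and `b_1(t)² = ∑ C(2n, n + 1) t^{2n} / n!²`, so that
`b_0(t)² - b_1(t)² = ∑ catalan n · t^{2n} / n!² = D_2(t)`.
-/

open Nat

theorem hasIncSubseq.le_length {k : ℕ} {σ : Equiv.Perm (Fin k)} {l : ℕ}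
    (h : hasIncSubseq k σ l) : l ≤ k := by
  obtain ⟨s, hs, -⟩ := h
  simpa using Fintype.card_le_of_injective s hs.injective

theorem f_le_factorial (k r : ℕ) : f k r ≤ k ! := by
  calc f k r ≤ Nat.card (Equiv.Perm (Fin k)) := Finite.card_subtype_le _
    _ = k ! := by rw [Nat.card_perm, Nat.card_fin]

theorem f_eq_factorial_of_le {k r : ℕ} (h : k ≤ r) : f k r = k ! := by
  rw [f, Nat.card_congr (Equiv.subtypeUnivEquiv fun σ l hl => hl.le_length.trans h),
    Nat.card_perm, Nat.card_fin]

theorem summable_f_mul_pow_div_factorial_sq (r : ℕ) (y : ℝ) :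
    Summable fun k => (f k r : ℝ) * y ^ k / (k ! : ℝ) ^ 2 := by
  refine (Real.summable_pow_div_factorial |y|).of_norm_bounded fun k => ?_
  have hk : (0 : ℝ) < k ! := by positivity
  rw [norm_div, norm_mul, Real.norm_natCast, norm_pow, Real.norm_eq_abs, norm_pow,
    Real.norm_natCast, sq, ← div_div, mul_div_assoc]
  calc (f k r : ℝ) * (|y| ^ k / k !) / k ! ≤ k ! * (|y| ^ k / k !) / k ! := by
        gcongr; exact_mod_cast f_le_factorial k r
    _ = |y| ^ k / k ! := by field_simp

theorem D_sqrt (r : ℕ) {y : ℝ} (hy : 0 ≤ y) :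
    D r (Real.sqrt y) = ∑' k, (f k r : ℝ) * y ^ k / (k ! : ℝ) ^ 2 := by
  simp only [D, pow_mul, Real.sq_sqrt hy]

theorem Fdist_eq_one_sub_phi (r : ℕ) {y : ℝ} (hy : 0 ≤ y) : Fdist r y = 1 - phi (r - 1) y := by
  set g : ℕ → ℝ := fun k => ((k ! : ℝ) - f k (r - 1)) * y ^ k / (k ! : ℝ) ^ 2
  have hexp : HasSum (fun k => y ^ k / (k ! : ℝ)) (Real.exp y) := by
    rw [Real.exp_eq_exp_ℝ, NormedSpace.exp_eq_tsum_div]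
    exact (Real.summable_pow_div_factorial y).hasSum
  have hg : HasSum g (Real.exp y - D (r - 1) (Real.sqrt y)) := by
    rw [D_sqrt _ hy]
    refine (hexp.sub (summable_f_mul_pow_div_factorial_sq (r - 1) y).hasSum).congr_fun fun k => ?_
    simp only [g]
    field_simp
  have hsmall : ∀ k ∈ Finset.range r, g k = 0 := fun k hk => by
    simp [g, f_eq_factorial_of_le (by simp at hk; omega : k ≤ r - 1)]
  have htail : ∑' k, g (r + k) = ∑' k, g k := by
    rw [← hg.summable.sum_add_tsum_nat_add r, Finset.sum_eq_zero hsmall, zero_add]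
    simp_rw [add_comm]
  show Real.exp (-y) * ∑' k, g (r + k) = _
  rw [htail, hg.tsum_eq, phi, mul_sub, ← Real.exp_add, neg_add_cancel, Real.exp_zero]

theorem catalan_eq_choose_sub_choose (n : ℕ) :
    (catalan n : ℤ) = (2 * n).choose n - (2 * n).choose (n + 1) := by
  have hcentral : ((n : ℤ) + 1) * catalan n = (2 * n).choose n := by
    exact_mod_cast succ_mul_catalan_eq_centralBinom n
  have hsucc : ((2 * n).choose (n + 1) : ℤ) * (n + 1) = (2 * n).choose n * n := by
    have := Nat.choose_succ_right_eq (2 * n) n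
    rw [show 2 * n - n = n by omega] at this
    exact_mod_cast this
  apply mul_right_cancel₀ (show ((n : ℤ) + 1) ≠ 0 by positivity)
  rw [sub_mul, hsucc, ← hcentral]
  ring

section Avoidance

open List

def Avoids123 (l : List ℕ) : Prop := ∀ a b c : ℕ, [a, b, c] <+ l → ¬(a < b ∧ b < c)

theorem Avoids123.sublist {l t : List ℕ} (h : Avoids123 l) (ht : t <+ l) : Avoids123 t :=
  fun a b c habc => h a b c (habc.trans ht)

theorem Avoids123.append_cons {p q : List ℕ} {n : ℕ} (h : Avoids123 (p ++ q))
    (hp : p.Pairwise (· > ·)) (hq : ∀ x ∈ q, x < n) : Avoids123 (p ++ n :: q) := by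
  intro a b c habc ⟨hab, hbc⟩
  obtain ⟨l₁, l₂, hl, h₁, h₂⟩ := sublist_append_iff.1 habc
  rcases sublist_cons_iff.1 h₂ with h₂ | ⟨r, rfl, hr⟩
  · exact h a b c (hl ▸ h₁.append h₂) ⟨hab, hbc⟩
  · match l₁, hl with
    | [], hl =>
      obtain ⟨rfl, rfl⟩ : a = n ∧ [b, c] = r := by simpa using hl
      exact (hq b (hr.subset (by simp))).not_gt hab
    | [_], hl =>
      obtain ⟨-, rfl, rfl⟩ : _ ∧ b = n ∧ [c] = r := by simpa using hl
      exact (hq c (hr.subset (by simp))).not_gt hbc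
    | [_, _], hl =>
      obtain ⟨rfl, rfl, -⟩ : a = _ ∧ b = _ ∧ _ := by simpa using hl
      exact (pairwise_iff_forall_sublist.1 hp h₁).not_gt hab
    | _ :: _ :: _ :: _, hl => simp at hl

noncomputable def decRun (l : List ℕ) : ℕ :=
  Nat.findGreatest (fun s => (l.take s).Pairwise (· > ·)) l.length

theorem decRun_le_length (l : List ℕ) : decRun l ≤ l.length := Nat.findGreatest_le _

theorem le_decRun_iff {l : List ℕ} {s : ℕ} (hs : s ≤ l.length) :
    s ≤ decRun l ↔ (l.take s).Pairwise (· > ·) := by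
  refine ⟨fun h => ?_, Nat.le_findGreatest (P := fun s => (l.take s).Pairwise (· > ·)) hs⟩
  have hrun : (l.take (decRun l)).Pairwise (· > ·) :=
    Nat.findGreatest_spec (P := fun s => (l.take s).Pairwise (· > ·)) (Nat.zero_le _) .nil
  rw [← min_eq_left h, ← take_take]
  exact hrun.sublist (take_sublist _ _)

theorem decRun_eq {l : List ℕ} {s : ℕ} (hs : s ≤ l.length) (hdec : (l.take s).Pairwise (· > ·))
    (hstop : s < l.length → ¬(l.take (s + 1)).Pairwise (· > ·)) : decRun l = s := by
  refine le_antisymm (not_lt.1 fun hlt => ?_) ((le_decRun_iff hs).2 hdec)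
  have hlen : s < l.length := hlt.trans_le (decRun_le_length l)
  exact hstop hlen ((le_decRun_iff hlen).1 hlt)

theorem decRun_pos {l : List ℕ} (hl : l ≠ []) : 0 < decRun l := by
  obtain ⟨a, t, rfl⟩ := exists_cons_of_ne_nil hl
  exact (le_decRun_iff (by simp)).2 (by simp)

theorem decRun_cons {n : ℕ} {m : List ℕ} (hm : ∀ x ∈ m, x < n) :
    decRun (n :: m) = decRun m + 1 := by
  have hcons : ∀ s, ((n :: m).take (s + 1)).Pairwise (· > ·) ↔ (m.take s).Pairwise (· > ·) :=
    fun s => by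
      simp only [take_succ_cons, pairwise_cons, and_iff_right_iff_imp]
      exact fun _ x hx => hm x (mem_of_mem_take hx)
  refine decRun_eq (by simpa using decRun_le_length m)
    ((hcons _).2 ((le_decRun_iff (decRun_le_length m)).1 le_rfl)) fun hlt hdec => ?_
  have hlen : decRun m + 1 ≤ m.length := by simpa using hlt
  exact (decRun m).lt_irrefl ((le_decRun_iff hlen).2 ((hcons _).1 hdec))

theorem decRun_append_cons {p q : List ℕ} {n : ℕ} (hp : p ≠ []) (hdec : p.Pairwise (· > ·))
    (hlt : ∀ x ∈ p, x < n) : decRun (p ++ n :: q) = p.length := by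
  refine decRun_eq (by simp) (by simpa using hdec) fun _ hdec' => ?_
  obtain ⟨x, hx⟩ := exists_mem_of_ne_nil p hp
  rw [take_length_add_append, take_succ_cons, take_zero,
    pairwise_append] at hdec'
  exact (hlt x hx).not_gt (hdec'.2.2 x hx n (by simp))

theorem perm_range_succ_append_cons_iff {p q : List ℕ} {n : ℕ} :
    (p ++ n :: q) ~ range (n + 1) ↔ (p ++ q) ~ range n := by
  rw [perm_middle.congr_left, range_succ, (perm_append_singleton n (range n)).congr_right,
    perm_cons]

theorem lt_of_perm_range {l : List ℕ} {n x : ℕ} (h : l ~ range n) (hx : x ∈ l) : x < n :=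
  mem_range.1 (h.subset hx)

noncomputable def arrangements (n : ℕ) : Finset (List ℕ) := (range n).permutations.toFinset

theorem mem_arrangements {n : ℕ} {l : List ℕ} : l ∈ arrangements n ↔ l ~ range n := by
  simp [arrangements, mem_permutations]

theorem card_arrangements (n : ℕ) : (arrangements n).card = n ! := by
  rw [arrangements, toFinset_card_of_nodup (nodup_permutations _ nodup_range),
    length_permutations, length_range]

open scoped Classical in
noncomputable def avoiders (n : ℕ) : Finset (List ℕ) := (arrangements n).filter Avoids123

theorem mem_avoiders {n : ℕ} {l : List ℕ} : l ∈ avoiders n ↔ l ~ range n ∧ Avoids123 l := by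
  simp only [avoiders, Finset.mem_filter, mem_arrangements]

theorem cons_mem_avoiders_succ {n : ℕ} {m : List ℕ} :
    n :: m ∈ avoiders (n + 1) ↔ m ∈ avoiders n := by
  simp only [mem_avoiders]
  exact ⟨fun ⟨hperm, hav⟩ => ⟨perm_range_succ_append_cons_iff (p := []).1 hperm,
      hav.sublist (sublist_cons_self n m)⟩,
    fun ⟨hperm, hav⟩ => ⟨perm_range_succ_append_cons_iff (p := []).2 hperm,
      hav.append_cons (p := []) .nil fun x hx => lt_of_perm_range hperm hx⟩⟩

theorem exists_eq_append_cons_of_mem_avoiders {n : ℕ} {l : List ℕ} (hl : l ∈ avoiders (n + 1))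
    (hhead : l.head? ≠ some n) :
    ∃ p q, l = p ++ n :: q ∧ p ≠ [] ∧ p.Pairwise (· > ·) ∧ p ++ q ∈ avoiders n := by
  rw [mem_avoiders] at hl
  obtain ⟨hperm, hav⟩ := hl
  obtain ⟨p, q, rfl⟩ := append_of_mem (hperm.mem_iff.2 (mem_range.2 n.lt_succ_self))
  have hpq : (p ++ q) ~ range n := perm_range_succ_append_cons_iff.1 hperm
  refine ⟨p, q, rfl, fun hp => hhead (by simp [hp]), ?_,
    mem_avoiders.2 ⟨hpq, hav.sublist (by simp)⟩⟩
  have hnodup : p.Nodup := (hpq.nodup_iff.2 nodup_range).sublist (sublist_append_left p q)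
  refine pairwise_iff_forall_sublist.2 fun {x y} hxy => ?_
  have hne : x ≠ y := by simpa using hnodup.sublist hxy
  have hy : y < n := lt_of_perm_range hpq (mem_append_left q (hxy.subset (by simp)))
  refine lt_of_le_of_ne (not_lt.1 fun hlt => hav x y n ?_ ⟨hlt, hy⟩) hne.symm
  exact (hxy.append (.cons_cons n (nil_sublist q))).trans (by simp)

theorem append_cons_mem_avoiders_succ {p q : List ℕ} {n : ℕ} (hpq : p ++ q ∈ avoiders n)
    (hp : p.Pairwise (· > ·)) : p ++ n :: q ∈ avoiders (n + 1) := by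
  rw [mem_avoiders] at hpq ⊢
  exact ⟨perm_range_succ_append_cons_iff.2 hpq.1, hpq.2.append_cons hp fun x hx =>
    lt_of_perm_range hpq.1 (mem_append_right p hx)⟩

theorem insertIdx_eq_take_append_cons_drop {α : Type*} {l : List α} {i : ℕ} (a : α)
    (hi : i ≤ l.length) : l.insertIdx i a = l.take i ++ a :: l.drop i := by
  induction l generalizing i with
  | nil => simp_all
  | cons b l ih =>
    cases i with
    | zero => simp
    | succ i => simp [ih (by simpa using hi)]

noncomputable def numDecRunEq (n s : ℕ) : ℕ := ((avoiders n).filter fun l => decRun l = s).card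

noncomputable def numDecRunGe (n s : ℕ) : ℕ := ((avoiders n).filter fun l => s ≤ decRun l).card

theorem numDecRunGe_eq_add (n s : ℕ) :
    numDecRunGe n s = numDecRunEq n s + numDecRunGe n (s + 1) := by
  rw [numDecRunGe, numDecRunEq, numDecRunGe, ← Finset.card_union_of_disjoint
    (Finset.disjoint_filter.2 fun _ _ h => by omega), ← Finset.filter_or]
  congr 1
  exact Finset.filter_congr fun _ _ => by omega

theorem numDecRunGe_of_lt {n s : ℕ} (h : n < s) : numDecRunGe n s = 0 := by
  refine Finset.card_eq_zero.2 (Finset.filter_eq_empty_iff.2 fun l hl hs => ?_)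
  have hlen := (mem_avoiders.1 hl).1.length_eq
  rw [length_range] at hlen
  have := decRun_le_length l
  omega

theorem numDecRunGe_zero_zero : numDecRunGe 0 0 = 1 := by
  have : avoiders 0 = {[]} := by
    ext l
    simp only [mem_avoiders, range_zero, perm_nil, Finset.mem_singleton, and_iff_left_iff_imp]
    rintro rfl a b c h
    simp at h
  simp [numDecRunGe, this]

theorem numDecRunGe_succ_zero (n : ℕ) : numDecRunGe (n + 1) 0 = numDecRunGe (n + 1) 1 := by
  refine congrArg Finset.card (Finset.filter_congr fun l hl => ?_)
  have hne : l ≠ [] := ne_nil_of_length_pos (by simp [(mem_avoiders.1 hl).1.length_eq])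
  simp only [Nat.zero_le, true_iff]
  exact decRun_pos hne

theorem card_filter_head_eq (n s : ℕ) :
    ((avoiders (n + 1)).filter fun l => decRun l = s + 1 ∧ l.head? = some n).card =
      numDecRunEq n s := by
  rw [numDecRunEq, ← Finset.card_image_of_injective ((avoiders n).filter _)
    (cons_injective (a := n))]
  congr 1
  ext l
  simp only [Finset.mem_filter, Finset.mem_image]
  constructor
  · rintro ⟨hl, hrun, hhead⟩
    obtain ⟨m, rfl⟩ : ∃ m, l = n :: m := by
      cases l <;> simp_all
    have hm := cons_mem_avoiders_succ.1 hl
    rw [decRun_cons fun x hx => lt_of_perm_range (mem_avoiders.1 hm).1 hx] at hrun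
    exact ⟨m, ⟨hm, by omega⟩, rfl⟩
  · rintro ⟨m, ⟨hm, rfl⟩, rfl⟩
    exact ⟨cons_mem_avoiders_succ.2 hm,
      decRun_cons fun x hx => lt_of_perm_range (mem_avoiders.1 hm).1 hx, rfl⟩

theorem card_filter_head_ne (n s : ℕ) :
    ((avoiders (n + 1)).filter fun l => decRun l = s + 1 ∧ l.head? ≠ some n).card =
      numDecRunGe n (s + 1) := by
  rw [numDecRunGe, ← Finset.card_image_of_injective ((avoiders n).filter _)
    (insertIdx_injective (s + 1) n)]
  congr 1
  ext l
  simp only [Finset.mem_filter, Finset.mem_image]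
  constructor
  · rintro ⟨hl, hrun, hhead⟩
    obtain ⟨p, q, rfl, hp, hdec, hpq⟩ := exists_eq_append_cons_of_mem_avoiders hl hhead
    have hlt : ∀ x ∈ p, x < n := fun x hx =>
      lt_of_perm_range (mem_avoiders.1 hpq).1 (mem_append_left q hx)
    rw [decRun_append_cons hp hdec hlt] at hrun
    refine ⟨p ++ q, ⟨hpq, ?_⟩, ?_⟩
    · rw [le_decRun_iff (by simp; omega), take_left' hrun]
      exact hdec
    · rw [insertIdx_eq_take_append_cons_drop _ (by simp; omega), take_left' hrun,
        drop_left' hrun]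
  · rintro ⟨m, ⟨hm, hrun⟩, rfl⟩
    have hlen : s + 1 ≤ m.length := hrun.trans (decRun_le_length m)
    have hp : (m.take (s + 1)).length = s + 1 := by simpa using hlen
    have hdec := (le_decRun_iff hlen).1 hrun
    have hlt : ∀ x ∈ m, x < n := fun x hx => lt_of_perm_range (mem_avoiders.1 hm).1 hx
    have hne : m.take (s + 1) ≠ [] := ne_nil_of_length_pos (by omega)
    rw [insertIdx_eq_take_append_cons_drop _ hlen]
    refine ⟨append_cons_mem_avoiders_succ (by rwa [take_append_drop]) hdec,
      (decRun_append_cons hne hdec fun x hx => hlt x (mem_of_mem_take hx)).trans hp, ?_⟩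
    obtain ⟨x, xs, hx⟩ := exists_cons_of_ne_nil hne
    rw [hx, cons_append, head?_cons, ne_eq, Option.some.injEq]
    exact (hlt x (mem_of_mem_take (hx ▸ mem_cons_self))).ne

theorem numDecRunEq_succ_succ (n s : ℕ) : numDecRunEq (n + 1) (s + 1) = numDecRunGe n s := by
  rw [numDecRunEq, ← Finset.card_filter_add_card_filter_not (fun l => l.head? = some n),
    Finset.filter_filter, Finset.filter_filter, card_filter_head_eq, card_filter_head_ne]
  exact (numDecRunGe_eq_add n s).symm

theorem numDecRunGe_succ_succ (n s : ℕ) :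
    numDecRunGe (n + 1) (s + 1) = numDecRunGe n s + numDecRunGe (n + 1) (s + 2) := by
  rw [numDecRunGe_eq_add (n + 1) (s + 1), numDecRunEq_succ_succ]

theorem numDecRunGe_eq_choose_sub_choose {n s d : ℕ} (hsd : s + d = 2 * n) (hd : n ≤ d) :
    (numDecRunGe n s : ℤ) = d.choose n - d.choose (n + 1) := by
  induction n generalizing s d with
  | zero =>
    obtain ⟨rfl, rfl⟩ : s = 0 ∧ d = 0 := by omega
    simp [numDecRunGe_zero_zero]
  | succ n ih =>
    induction d, hd using Nat.le_induction generalizing s with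
    | base =>
      obtain rfl : s = n + 1 := by omega
      rw [numDecRunGe_succ_succ, numDecRunGe_of_lt (n := n + 1) (s := n + 2) (by omega),
        add_zero, ih (d := n) (by omega) le_rfl]
      simp
    | succ d hd ihd =>
      rcases s with _ | s
      · obtain rfl : d = 2 * n + 1 := by omega
        rw [numDecRunGe_succ_zero, ihd (by omega), Nat.choose_succ_succ (2 * n + 1) n,
          Nat.choose_succ_succ (2 * n + 1) (n + 1), ← Nat.choose_symm_half]
        push_cast
        ring
      · rw [numDecRunGe_succ_succ, Nat.cast_add, ih (d := d) (by omega) (by omega), ihd (by omega),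
          Nat.choose_succ_succ d n, Nat.choose_succ_succ d (n + 1)]
        push_cast
        ring

theorem numDecRunGe_zero_eq_catalan (n : ℕ) : numDecRunGe n 0 = catalan n := by
  have := numDecRunGe_eq_choose_sub_choose (n := n) (s := 0) (d := 2 * n) (by omega) (by omega)
  rw [← catalan_eq_choose_sub_choose] at this
  exact_mod_cast this

theorem ofFn_comp_sublist {α : Type*} {k l : ℕ} (g : Fin k → α) {s : Fin l → Fin k}
    (hs : StrictMono s) : ofFn (g ∘ s) <+ ofFn g := by
  refine sublist_iff_exists_fin_orderEmbedding_get_eq.2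
    ⟨OrderEmbedding.ofStrictMono (fun i => Fin.cast (length_ofFn).symm (s (Fin.cast length_ofFn i)))
      fun i j hij => hs hij, fun i => ?_⟩
  simp only [get_eq_getElem, List.getElem_ofFn, Function.comp_apply]
  rfl

theorem exists_strictMono_of_sublist_ofFn {α : Type*} {k : ℕ} {g : Fin k → α} {t : List α}
    (h : t <+ ofFn g) : ∃ s : Fin t.length → Fin k, StrictMono s ∧ ofFn (g ∘ s) = t := by
  obtain ⟨e, he⟩ := sublist_iff_exists_fin_orderEmbedding_get_eq.1 h
  refine ⟨fun i => Fin.cast length_ofFn (e i), fun i j hij => e.strictMono hij, ?_⟩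
  refine ext_get (by simp) fun i h₁ h₂ => ?_
  have := he ⟨i, h₂⟩
  simp only [get_eq_getElem, List.getElem_ofFn] at this
  simp only [get_eq_getElem, List.getElem_ofFn, Function.comp_apply, this]
  rfl

def permList {n : ℕ} (σ : Equiv.Perm (Fin n)) : List ℕ := ofFn fun i => (σ i : ℕ)

theorem permList_injective (n : ℕ) : Function.Injective (permList (n := n)) :=
  fun _ _ h => Equiv.ext fun i => Fin.ext (congrFun (ofFn_injective h) i)

theorem permList_mem_arrangements {n : ℕ} (σ : Equiv.Perm (Fin n)) :
    permList σ ∈ arrangements n := by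
  refine mem_arrangements.2 ((perm_ext_iff_of_nodup ?_ nodup_range).2 fun a => ?_)
  · exact nodup_ofFn.2 (Fin.val_injective.comp σ.injective)
  · simp only [permList, mem_ofFn, mem_range]
    exact ⟨fun ⟨i, hi⟩ => hi ▸ (σ i).isLt, fun ha => ⟨σ.symm ⟨a, ha⟩, by simp⟩⟩

theorem image_permList (n : ℕ) :
    (Finset.univ : Finset (Equiv.Perm (Fin n))).image permList = arrangements n := by
  refine Finset.eq_of_subset_of_card_le (fun l hl => ?_) ?_
  · obtain ⟨σ, -, rfl⟩ := Finset.mem_image.1 hl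
    exact permList_mem_arrangements σ
  · rw [card_arrangements, Finset.card_image_of_injective _ (permList_injective n),
      Finset.card_univ, Fintype.card_perm, Fintype.card_fin]

theorem hasIncSubseq_iff {k l : ℕ} {σ : Equiv.Perm (Fin k)} :
    hasIncSubseq k σ l ↔ ∃ t, t <+ permList σ ∧ t.length = l ∧ t.Pairwise (· < ·) := by
  constructor
  · rintro ⟨s, hs, hσs⟩
    exact ⟨_, ofFn_comp_sublist _ hs, length_ofFn, pairwise_ofFn.2 fun i j hij => hσs hij⟩
  · rintro ⟨t, ht, rfl, hpw⟩
    obtain ⟨s, hs, hst⟩ := exists_strictMono_of_sublist_ofFn ht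
    rw [← hst] at hpw
    exact ⟨s, hs, fun i j hij => Fin.lt_def.2 (pairwise_ofFn.1 hpw hij)⟩

theorem forall_hasIncSubseq_le_two_iff {k : ℕ} (σ : Equiv.Perm (Fin k)) :
    (∀ l, hasIncSubseq k σ l → l ≤ 2) ↔ Avoids123 (permList σ) := by
  constructor
  · intro h a b c habc ⟨hab, hbc⟩
    have := h 3 (hasIncSubseq_iff.2 ⟨[a, b, c], habc, rfl, by simp [hab, hbc, hab.trans hbc]⟩)
    omega
  · intro hav l hl
    obtain ⟨t, ht, rfl, hpw⟩ := hasIncSubseq_iff.1 hl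
    match t, ht, hpw with
    | [], _, _ | [_], _, _ | [_, _], _, _ => simp
    | a :: b :: c :: r, ht, hpw =>
      have habc : [a, b, c] <+ a :: b :: c :: r := sublist_append_left [a, b, c] r
      have hinc := hpw.sublist habc
      simp only [pairwise_cons, mem_cons, forall_eq_or_imp] at hinc
      exact absurd ⟨hinc.1.1, hinc.2.1.1⟩ (hav a b c (habc.trans ht))

theorem f_two_eq_catalan (k : ℕ) : f k 2 = catalan k := by
  classical
  rw [f, Nat.card_congr (Equiv.subtypeEquivRight forall_hasIncSubseq_le_two_iff),
    Nat.card_eq_fintype_card, Fintype.card_subtype, ← numDecRunGe_zero_eq_catalan,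
    numDecRunGe, Finset.filter_true_of_mem fun _ _ => Nat.zero_le _, avoiders,
    ← image_permList, Finset.filter_image,
    Finset.card_image_of_injective _ (permList_injective k)]

end Avoidance

section Bessel

open Finset

noncomputable def besselTerm (j : ℕ) (t : ℝ) (m : ℕ) : ℝ := t ^ (2 * m + j) / ((m ! : ℝ) * (m + j)!)

theorem b_eq_tsum_besselTerm (j : ℕ) (t : ℝ) : b j t = ∑' m, besselTerm j t m := rfl

theorem summable_norm_besselTerm (j : ℕ) (t : ℝ) : Summable fun m => ‖besselTerm j t m‖ := by
  refine ((Real.summable_pow_div_factorial (t ^ 2)).mul_right (|t| ^ j)).of_nonneg_of_le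
    (fun _ => norm_nonneg _) fun m => ?_
  have h1 : (1 : ℝ) ≤ (m + j)! := by exact_mod_cast (m + j).factorial_pos
  rw [besselTerm, norm_div, norm_pow, Real.norm_eq_abs, norm_mul, Real.norm_natCast,
    Real.norm_natCast, pow_add, pow_mul, sq_abs]
  calc (t ^ 2) ^ m * |t| ^ j / (m ! * (m + j)!) ≤ (t ^ 2) ^ m * |t| ^ j / (m ! * 1) := by
        gcongr
    _ = (t ^ 2) ^ m / m ! * |t| ^ j := by ring

theorem summable_choose_mul_pow_div_factorial_sq (r : ℕ → ℕ) (t : ℝ) :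
    Summable fun n => ((2 * n).choose (r n) : ℝ) * t ^ (2 * n) / (n ! : ℝ) ^ 2 := by
  have ht : ∀ n : ℕ, 0 ≤ t ^ (2 * n) := fun n => (even_two_mul n).pow_nonneg t
  refine (Real.summable_pow_div_factorial (4 * t ^ 2)).of_nonneg_of_le
    (fun n => by have := ht n; positivity) fun n => ?_
  have hc : ((2 * n).choose (r n) : ℝ) ≤ 4 ^ n := by
    exact_mod_cast (choose_le_centralBinom _ n).trans (centralBinom_le_four_pow n)
  have h1 : (1 : ℝ) ≤ n ! := by exact_mod_cast n.factorial_pos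
  calc ((2 * n).choose (r n) : ℝ) * t ^ (2 * n) / (n ! : ℝ) ^ 2
      ≤ 4 ^ n * t ^ (2 * n) / (n ! * 1) := by
        have := ht n
        rw [sq]; gcongr
    _ = (4 * t ^ 2) ^ n / n ! := by rw [mul_pow, pow_mul, mul_one]

theorem sum_antidiagonal_choose_mul_choose (m n : ℕ) :
    ∑ kl ∈ antidiagonal n, (m.choose kl.1 : ℝ) * m.choose kl.2 = (2 * m).choose n := by
  rw [two_mul, Nat.add_choose_eq]
  push_cast
  rfl

theorem besselTerm_zero_mul (t : ℝ) (k l : ℕ) :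
    besselTerm 0 t k * besselTerm 0 t l =
      ((k + l).choose k * (k + l).choose l : ℝ) * (t ^ (2 * (k + l)) / ((k + l)! : ℝ) ^ 2) := by
  simp only [besselTerm, add_zero]
  rw [← Nat.choose_symm_add, Nat.cast_add_choose]
  field_simp
  ring

theorem besselTerm_one_mul (t : ℝ) (k l : ℕ) :
    besselTerm 1 t k * besselTerm 1 t l =
      ((k + l + 1).choose k * (k + l + 1).choose l : ℝ) *
        (t ^ (2 * (k + l + 1)) / ((k + l + 1)! : ℝ) ^ 2) := by
  have hk : k + l + 1 = k + (l + 1) := by ring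
  have hl : k + l + 1 = l + (k + 1) := by ring
  rw [besselTerm, besselTerm, hk, Nat.cast_add_choose, ← hk, hl, Nat.cast_add_choose, ← hl]
  field_simp
  ring

theorem b_zero_sq (t : ℝ) :
    b 0 t ^ 2 = ∑' n, ((2 * n).choose n : ℝ) * t ^ (2 * n) / (n ! : ℝ) ^ 2 := by
  rw [sq, b_eq_tsum_besselTerm, tsum_mul_tsum_eq_tsum_sum_antidiagonal_of_summable_norm
    (summable_norm_besselTerm 0 t) (summable_norm_besselTerm 0 t)]
  refine tsum_congr fun n => ?_
  rw [sum_congr rfl fun kl hkl => by rw [besselTerm_zero_mul, mem_antidiagonal.1 hkl],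
    ← sum_mul, sum_antidiagonal_choose_mul_choose, mul_div_assoc]

theorem b_one_sq (t : ℝ) :
    b 1 t ^ 2 = ∑' n, ((2 * n).choose (n + 1) : ℝ) * t ^ (2 * n) / (n ! : ℝ) ^ 2 := by
  rw [(summable_choose_mul_pow_div_factorial_sq (· + 1) t).tsum_eq_zero_add]
  rw [sq, b_eq_tsum_besselTerm, tsum_mul_tsum_eq_tsum_sum_antidiagonal_of_summable_norm
    (summable_norm_besselTerm 1 t) (summable_norm_besselTerm 1 t)]
  simp only [mul_zero, Nat.choose_zero_succ, CharP.cast_eq_zero, zero_mul, zero_div, zero_add]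
  refine tsum_congr fun n => ?_
  rw [sum_congr rfl fun kl hkl => by rw [besselTerm_one_mul, mem_antidiagonal.1 hkl],
    ← sum_mul, sum_antidiagonal_choose_mul_choose, mul_div_assoc]
  have : (2 * (n + 1)).choose n = (2 * (n + 1)).choose (n + 1 + 1) := by
    rw [← Nat.choose_symm (by omega : n ≤ 2 * (n + 1))]
    congr 1
    omega
  rw [this]

end Bessel

theorem D_two (t : ℝ) : D 2 t = b 0 t ^ 2 - b 1 t ^ 2 := by
  simp only [D, f_two_eq_catalan]
  rw [b_zero_sq, b_one_sq, ← (summable_choose_mul_pow_div_factorial_sq (fun n => n) t).tsum_sub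
    (summable_choose_mul_pow_div_factorial_sq (· + 1) t)]
  refine tsum_congr fun n => ?_
  rw [← sub_div, ← sub_mul]
  congr 2
  exact_mod_cast catalan_eq_choose_sub_choose n

theorem stmt5 (y : ℝ) (hy : 0 ≤ y) :
    Fdist 3 y = 1 - (b 0 (Real.sqrt y) ^ 2 - b 1 (Real.sqrt y) ^ 2) * Real.exp (-y) := by
  rw [Fdist_eq_one_sub_phi 3 hy, phi, D_two, mul_comm]
end
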